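/- Let G be a group and B a commutative unital algebra with a G-module structure S : G → Aut(B). Two crossed product algebras A_ω and A_{ω'} (built from 2-cocycles ω, ω' ∈ Z²(G, B^×) for the module structure S) are equivalent as (G,B)-crossed product algebras if and only if ω'·ω^{-1} is a coboundary in B²(G, B^×); consequently the map [ω] ↦ [A_ω] from H²(G, B^×)_S to equivalence classes of (G,B)-crossed products with G-module structure S is a bijection. -/

import Mathlib

/-!
An additive map `A_{ω'} → A_ω` that preserves the grading and fixes `B` is forced to be a
rescaling `b v_g ↦ b·k(g) v_g`: by normalization `b v_g = v_g · S(g)⁻¹(b) v_1`, so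
multiplicativity pins it down by its values `k(g) v_g` on the `v_g`. Such a rescaling is
bijective exactly when every `k(g)` is a unit, and it is multiplicative exactly when
`ω'(g,g')·k(gg') = k(g)·S(g)(k(g'))·ω(g,g')`, i.e. when `ω'·ω⁻¹` is the coboundary of `k`.
So the two relations on cocycles coincide, and their quotients are identified.
-/

/-- Crossed-product multiplication on `⊕_{g ∈ G} B v_g`, modelled on `G →₀ B`:
`(b v_g)(b' v_{g'}) = b·S(g)(b')·ω(g,g') v_{gg'}`. -/
noncomputable def cpMul {G : Type*} [Group G] {B : Type*} [CommRing B]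
    (S : G →* (B ≃+* B)) (ω : G → G → Bˣ) :
    (G →₀ B) → (G →₀ B) → (G →₀ B) := fun f₁ f₂ =>
  f₁.sum fun g b => f₂.sum fun g' b' =>
    Finsupp.single (g * g') (b * S g b' * (ω g g' : B))

variable {G : Type*} [Group G] {B : Type*} [CommRing B] (S : G →* (B ≃+* B))

/-- Normalized 2-cocycles `ω ∈ Z²(G, Bˣ)` for the `G`-module structure `S`. -/
def IsCocycle (ω : G → G → Bˣ) : Prop :=
  (∀ g, ω g 1 = 1 ∧ ω 1 g = 1) ∧
  ∀ g g' g'', (S g (ω g' g'') : B) * (ω g (g' * g'') : B) =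
    (ω g g' : B) * (ω (g * g') g'' : B)

/-- `ω` and `ω'` are cohomologous: `ω'·ω⁻¹` is the coboundary of some normalized
`h ∈ C¹(G, Bˣ)`, i.e. `ω'(g,g') = h(g)·S(g)(h(g'))·h(gg')⁻¹·ω(g,g')`. -/
def Cohomologous (ω ω' : G → G → Bˣ) : Prop :=
  ∃ h : G → Bˣ, h 1 = 1 ∧ ∀ g g',
    (ω' g g' : B) = (h g : B) * S g (h g') * ((h (g * g'))⁻¹ : Bˣ) * (ω g g' : B)

/-- The crossed product algebras `A_ω` and `A_{ω'}` are equivalent: there is a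
grading-preserving multiplicative additive bijection fixing `B` pointwise. -/
def AlgEquivalent (ω ω' : G → G → Bˣ) : Prop :=
  ∃ φ : (G →₀ B) → (G →₀ B),
    Function.Bijective φ ∧
    (∀ x y : G →₀ B, φ (x + y) = φ x + φ y) ∧
    (∀ x y : G →₀ B, φ (cpMul S ω' x y) = cpMul S ω (φ x) (φ y)) ∧
    (∀ b : B, φ (Finsupp.single 1 b) = Finsupp.single 1 b) ∧
    (∀ (g : G) (b : B), ∃ b' : B, φ (Finsupp.single g b) = Finsupp.single g b')


open Finsupp

set_option linter.unusedSectionVars false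

section CrossedProduct

variable (ω : G → G → Bˣ)

lemma cpMul_single (g g' : G) (b b' : B) :
    cpMul S ω (single g b) (single g' b') = single (g * g') (b * S g b' * (ω g g' : B)) := by
  unfold cpMul
  rw [sum_single_index (by simp), sum_single_index (by simp)]

lemma cpMul_zero_left (y : G →₀ B) : cpMul S ω 0 y = 0 :=
  sum_zero_index

lemma cpMul_zero_right (x : G →₀ B) : cpMul S ω x 0 = 0 := by
  simp [cpMul]

lemma cpMul_add_left (x y z : G →₀ B) :
    cpMul S ω (x + y) z = cpMul S ω x z + cpMul S ω y z :=
  sum_add_index' (by simp) (by intros; simp [add_mul, single_add, sum_add])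

lemma cpMul_add_right (x y z : G →₀ B) :
    cpMul S ω x (y + z) = cpMul S ω x y + cpMul S ω x z := by
  unfold cpMul
  rw [← sum_add]
  exact sum_congr fun g _ =>
    sum_add_index' (by simp) (by intros; simp [mul_add, add_mul, single_add])

lemma map_cpMul_of_map_cpMul_single {ω' : G → G → Bˣ} (φ : (G →₀ B) →+ (G →₀ B))
    (hφ : ∀ (g g' : G) (b b' : B), φ (cpMul S ω' (single g b) (single g' b')) =
      cpMul S ω (φ (single g b)) (φ (single g' b')))
    (x y : G →₀ B) : φ (cpMul S ω' x y) = cpMul S ω (φ x) (φ y) := by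
  induction x using Finsupp.induction_linear with
  | zero => simp [cpMul_zero_left]
  | add x x' hx hx' => simp [cpMul_add_left, hx, hx']
  | single g b =>
    induction y using Finsupp.induction_linear with
    | zero => simp [cpMul_zero_right]
    | add y y' hy hy' => simp [cpMul_add_right, hy, hy']
    | single g' b' => exact hφ g g' b b'

end CrossedProduct

variable {ω ω' : G → G → Bˣ}

noncomputable def rescale (u : G → B) : (G →₀ B) →+ (G →₀ B) :=
  liftAddHom fun g => (singleAddHom g).comp (AddMonoidHom.mulRight (u g))

lemma rescale_single (u : G → B) (g : G) (b : B) :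
    rescale u (single g b) = single g (b * u g) :=
  liftAddHom_apply_single _ _ _

lemma rescale_apply (u : G → B) (f : G →₀ B) (g : G) : rescale u f g = f g * u g := by
  induction f using Finsupp.induction_linear with
  | zero => simp
  | add f f' hf hf' => simp [hf, hf', add_mul]
  | single a b =>
    rw [rescale_single]
    rcases eq_or_ne a g with rfl | hag
    · simp
    · simp [hag]

lemma rescale_units_bijective (u : G → Bˣ) : Function.Bijective (rescale fun g => (u g : B)) := by
  refine ⟨fun f f' hff' => ext fun g => ?_,
    fun f => ⟨rescale (fun g => (((u g)⁻¹ : Bˣ) : B)) f, ?_⟩⟩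
  · simpa [rescale_apply] using DFunLike.congr_fun hff' g
  · ext g
    simp [rescale_apply, mul_assoc]

lemma rescale_cpMul_iff (u : G → B) :
    (∀ x y, rescale u (cpMul S ω' x y) = cpMul S ω (rescale u x) (rescale u y)) ↔
      ∀ g g', (ω' g g' : B) * u (g * g') = u g * S g (u g') * ω g g' := by
  constructor
  · intro h g g'
    have h11 := h (single g 1) (single g' 1)
    simp only [cpMul_single, rescale_single, map_one] at h11
    simpa using single_injective _ h11
  · intro h
    refine map_cpMul_of_map_cpMul_single S ω _ fun g g' b b' => ?_
    simp only [cpMul_single, rescale_single, map_mul]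
    congr 1
    linear_combination b * S g b' * h g g'

lemma cohomologous_iff :
    Cohomologous S ω ω' ↔ ∃ k : G → Bˣ, k 1 = 1 ∧
      ∀ g g', (ω' g g' : B) * k (g * g') = k g * S g (k g') * ω g g' := by
  refine exists_congr fun k => and_congr_right fun _ => forall₂_congr fun g g' => ?_
  have hk := Units.inv_mul (k (g * g'))
  constructor
  · intro h
    linear_combination (k (g * g') : B) * h + (k g : B) * S g (k g') * ω g g' * hk
  · intro h
    linear_combination ((k (g * g'))⁻¹ : Bˣ) * h - (ω' g g' : B) * hk

lemma algEquivalent_of_cohomologous (h : Cohomologous S ω ω') : AlgEquivalent S ω ω' := by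
  obtain ⟨k, hk1, hk⟩ := (cohomologous_iff S).mp h
  refine ⟨rescale fun g => (k g : B), rescale_units_bijective k, map_add _,
    (rescale_cpMul_iff S _).mpr hk, fun b => ?_, fun g b => ⟨_, rescale_single _ g b⟩⟩
  simp [rescale_single, hk1]

lemma exists_eq_rescale_of_map_cpMul (hω : ∀ g, ω g 1 = 1) (hω' : ∀ g, ω' g 1 = 1)
    {φ : (G →₀ B) → (G →₀ B)} (hadd : ∀ x y, φ (x + y) = φ x + φ y)
    (hmul : ∀ x y, φ (cpMul S ω' x y) = cpMul S ω (φ x) (φ y))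
    (hB : ∀ b, φ (single 1 b) = single 1 b)
    (hgr : ∀ g b, ∃ b', φ (single g b) = single g b') :
    ∃ k : G → B, k 1 = 1 ∧ φ = rescale k := by
  choose k hk using fun g => hgr g 1
  have hsingle : ∀ g c, φ (single g c) = single g (c * k g) := fun g c => by
    have hc : cpMul S ω' (single g 1) (single 1 ((S g).symm c)) = single g c := by
      simp [cpMul_single, hω']
    rw [← hc, hmul, hk, hB, cpMul_single]
    simp [hω, mul_comm]
  refine ⟨k, ?_, ?_⟩
  · simpa using single_injective _ ((hsingle 1 1).symm.trans (hB 1))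
  · let Φ : (G →₀ B) →+ (G →₀ B) := AddMonoidHom.mk' φ hadd
    change ⇑Φ = rescale k
    congr 1
    exact addHom_ext fun g c => by simp [Φ, hsingle, rescale_single]

lemma cohomologous_of_algEquivalent (hω : ∀ g, ω g 1 = 1) (hω' : ∀ g, ω' g 1 = 1)
    (h : AlgEquivalent S ω ω') : Cohomologous S ω ω' := by
  obtain ⟨φ, hbij, hadd, hmul, hB, hgr⟩ := h
  obtain ⟨k, hk1, rfl⟩ := exists_eq_rescale_of_map_cpMul S hω hω' hadd hmul hB hgr
  have hunit : ∀ g, IsUnit (k g) := fun g => by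
    obtain ⟨f, hf⟩ := hbij.2 (single g 1)
    have hfg := DFunLike.congr_fun hf g
    rw [rescale_apply, single_eq_same] at hfg
    exact IsUnit.of_mul_eq_one (f g) (by rw [mul_comm, hfg])
  refine (cohomologous_iff S).mpr ⟨fun g => (hunit g).unit, Units.ext hk1, ?_⟩
  simpa using (rescale_cpMul_iff S k).mp hmul

/-- For a commutative unital algebra `B` with `G`-module structure
`S`, two crossed product algebras `A_ω` and `A_{ω'}` built from 2-cocycles
`ω, ω' ∈ Z²(G, Bˣ)` are equivalent as `(G,B)`-crossed product algebras if and only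
if `ω'·ω⁻¹` is a coboundary; consequently `[ω] ↦ [A_ω]` induces a bijection from
`H²(G, Bˣ)_S` onto the set of equivalence classes of such crossed products. -/
theorem stmt18 : (∀ ω ω' : {ω : G → G → Bˣ // IsCocycle S ω},
      AlgEquivalent S ω.1 ω'.1 ↔ Cohomologous S ω.1 ω'.1) ∧
    ∃ F : Quot (fun ω ω' : {ω : G → G → Bˣ // IsCocycle S ω} =>
          Cohomologous S ω.1 ω'.1) →
        Quot (fun ω ω' : {ω : G → G → Bˣ // IsCocycle S ω} =>
          AlgEquivalent S ω.1 ω'.1),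
      Function.Bijective F ∧ ∀ ω, F (Quot.mk _ ω) = Quot.mk _ ω := by
  have hiff : ∀ ω ω' : {ω : G → G → Bˣ // IsCocycle S ω},
      AlgEquivalent S ω.1 ω'.1 ↔ Cohomologous S ω.1 ω'.1 := fun ω ω' =>
    ⟨cohomologous_of_algEquivalent S (fun g => (ω.2.1 g).1) (fun g => (ω'.2.1 g).1),
      algEquivalent_of_cohomologous S⟩
  exact ⟨hiff, Quot.congrRight fun ω ω' => (hiff ω ω').symm, Equiv.bijective _, fun _ => rfl⟩
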